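/- Let A be a unital associative real algebra and T ∈ A. Then: (a) σ_Cl(T) = {(x, v) ∈ ℝ × E : {x + i‖v‖, x − i‖v‖} ∩ σ_ℂ(T) ≠ ∅}; and (b) σ_ℂ(T) = {λ ∈ ℂ : ∃ (x, v) ∈ σ_Cl(T), λ = x + i‖v‖ ∨ λ = x − i‖v‖}. -/

import Mathlib

/-- The complex spectrum of an element `T` of a real algebra:
`σ_ℂ(T) = {λ : ¬ IsUnit (T² - 2Re(λ) T + |λ|² 1)}`. -/
def sigmaC {A : Type*} [Ring A] [Algebra ℝ A] (T : A) : Set ℂ :=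
  {lam : ℂ | ¬ IsUnit (T ^ 2 - (2 * lam.re) • T + (Complex.normSq lam) • (1 : A))}

/-- The Clifford spectrum of `T`, as a set of paravectors `(x, v) ∈ ℝ × E`:
`σ_Cl(T) = {(x, v) : ¬ IsUnit (T² - 2x T + (x² + ‖v‖²) 1)}`. -/
def sigmaCl {A : Type*} [Ring A] [Algebra ℝ A] (n : ℕ) (T : A) :
    Set (ℝ × EuclideanSpace ℝ (Fin n)) :=
  {p | ¬ IsUnit (T ^ 2 - (2 * p.1) • T + (p.1 ^ 2 + ‖p.2‖ ^ 2) • (1 : A))}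

/-! `σ_ℂ(T)` only sees `Re λ` and `|λ|²`, so it is invariant under conjugation, and the element
of `A` defining `(x, v) ∈ σ_Cl(T)` is the one defining `x + ‖v‖ i ∈ σ_ℂ(T)`. Conversely every
`λ ∈ ℂ` is `Re λ + |Im λ| i` or its conjugate, and `|Im λ| = ‖v‖` for some `v` once `n ≥ 1`. -/

open Complex ComplexConjugate

theorem eq_re_add_abs_im_mul_I_or_eq_conj (z : ℂ) :
    z = z.re + |z.im| * I ∨ z = conj (z.re + |z.im| * I) := by
  rcases abs_choice z.im with h | h <;> rw [h]
  · exact Or.inl (re_add_im z).symm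
  · right; apply Complex.ext <;> simp

theorem ofReal_sub_mul_I_eq_conj (x r : ℝ) : (x - r * I : ℂ) = conj (x + r * I) := by
  rw [map_add, map_mul, conj_ofReal, conj_ofReal, conj_I]; ring

section

variable {A : Type*} [Ring A] [Algebra ℝ A] (T : A)

theorem ofReal_add_mul_I_mem_sigmaC_iff (x r : ℝ) :
    (x + r * I : ℂ) ∈ sigmaC T ↔
      ¬ IsUnit (T ^ 2 - (2 * x) • T + (x ^ 2 + r ^ 2) • (1 : A)) := by
  simp only [sigmaC, Set.mem_ofPred_eq, add_re, ofReal_re, mul_re, I_re, mul_zero, ofReal_im,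
    I_im, mul_one, sub_self, add_zero, normSq_add_mul_I]

theorem conj_mem_sigmaC_iff (z : ℂ) : conj z ∈ sigmaC T ↔ z ∈ sigmaC T := by
  simp only [sigmaC, Set.mem_ofPred_eq, conj_re, normSq_conj]

theorem mem_sigmaC_iff_re_add_abs_im_mul_I_mem (z : ℂ) :
    z ∈ sigmaC T ↔ (z.re + |z.im| * I : ℂ) ∈ sigmaC T := by
  rcases eq_re_add_abs_im_mul_I_or_eq_conj z with h | h
  · rw [← h]
  · rw [← conj_mem_sigmaC_iff T (z.re + |z.im| * I), ← h]

theorem mem_sigmaCl_iff {n : ℕ} (p : ℝ × EuclideanSpace ℝ (Fin n)) :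
    p ∈ sigmaCl n T ↔ (p.1 + ‖p.2‖ * I : ℂ) ∈ sigmaC T :=
  (ofReal_add_mul_I_mem_sigmaC_iff T p.1 ‖p.2‖).symm

end

/-- (a) `σ_Cl(T)` consists of the paravectors whose spectrum meets
`σ_ℂ(T)`; (b) `σ_ℂ(T)` consists of the eigenvalues of elements of `σ_Cl(T)`. -/
theorem stmt17 {n : ℕ} (hn : 1 ≤ n) (A : Type*) [Ring A] [Algebra ℝ A] (T : A) :
    sigmaCl n T =
      {p : ℝ × EuclideanSpace ℝ (Fin n) |
        ({(p.1 : ℂ) + ‖p.2‖ * Complex.I, (p.1 : ℂ) - ‖p.2‖ * Complex.I} : Set ℂ)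
          ∩ sigmaC T ≠ ∅} ∧
    sigmaC T =
      {lam : ℂ | ∃ p : ℝ × EuclideanSpace ℝ (Fin n), p ∈ sigmaCl n T ∧
        (lam = (p.1 : ℂ) + ‖p.2‖ * Complex.I ∨ lam = (p.1 : ℂ) - ‖p.2‖ * Complex.I)} := by
  constructor
  · ext p
    simp only [Set.mem_ofPred_eq, ← Set.nonempty_iff_ne_empty, Set.inter_nonempty,
      Set.mem_insert_iff, Set.mem_singleton_iff, exists_eq_or_imp, exists_eq_left,
      ofReal_sub_mul_I_eq_conj, conj_mem_sigmaC_iff, or_self, mem_sigmaCl_iff]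
  · ext z
    simp only [Set.mem_ofPred_eq, mem_sigmaCl_iff, ofReal_sub_mul_I_eq_conj]
    constructor
    · intro hz
      have : Nonempty (Fin n) := ⟨⟨0, hn⟩⟩
      obtain ⟨v, hv⟩ := exists_norm_eq (EuclideanSpace ℝ (Fin n)) (abs_nonneg z.im)
      refine ⟨(z.re, v), ?_, ?_⟩ <;> rw [hv]
      · exact (mem_sigmaC_iff_re_add_abs_im_mul_I_mem T z).1 hz
      · exact eq_re_add_abs_im_mul_I_or_eq_conj z
    · rintro ⟨p, hp, rfl | rfl⟩
      · exact hp
      · exact (conj_mem_sigmaC_iff T _).2 hp
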